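/- For integers m, n ≥ 3 with m even, the radio number of the Cartesian product of the path P_m and the star K_{1,n} is rn(P_m □ K_{1,n}) = (m²(n+1) + 2(m − 1))/2. -/

import Mathlib

open SimpleGraph Finset

/-- The weight of a graph at a vertex: the sum of the distances to all vertices. -/
noncomputable def gWeight {V : Type*} [Fintype V] (G : SimpleGraph V) (v : V) : ℕ :=
  ∑ u, G.dist u v

/-- A vertex is a weight center if its weight is minimum among all vertices. -/
def IsWeightCenter {V : Type*} [Fintype V] (G : SimpleGraph V) (v : V) : Prop :=
  ∀ u, gWeight G v ≤ gWeight G u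

/-- The level of a vertex: the minimum distance to a weight center. -/
noncomputable def level {V : Type*} [Fintype V] (G : SimpleGraph V) (u : V) : ℕ :=
  sInf {d | ∃ w, IsWeightCenter G w ∧ d = G.dist u w}

/-- The total level of a graph: the sum of the levels of all vertices. -/
noncomputable def totalLevel {V : Type*} [Fintype V] (G : SimpleGraph V) : ℕ :=
  ∑ u, level G u

/-- The diameter: the maximum distance between two vertices. -/
noncomputable def graphDiam {V : Type*} [Fintype V] (G : SimpleGraph V) : ℕ :=
  Finset.univ.sup fun p : V × V => G.dist p.1 p.2

/-- A radio labeling: |f u - f v| ≥ diam + 1 - d(u,v) for all distinct u, v. -/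
def IsRadioLabeling {V : Type*} [Fintype V] (G : SimpleGraph V) (f : V → ℕ) : Prop :=
  ∀ u v : V, u ≠ v → (graphDiam G : ℤ) + 1 - G.dist u v ≤ |(f u : ℤ) - (f v : ℤ)|

/-- The span of a labeling: the maximum difference between two labels. -/
noncomputable def radioSpan {V : Type*} [Fintype V] (f : V → ℕ) : ℕ :=
  Finset.univ.sup fun p : V × V => ((f p.1 : ℤ) - (f p.2 : ℤ)).natAbs

/-- The radio number: the minimum span of a radio labeling. -/
noncomputable def radioNumber {V : Type*} [Fintype V] (G : SimpleGraph V) : ℕ :=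
  sInf {s | ∃ f : V → ℕ, IsRadioLabeling G f ∧ s = radioSpan f}

/-- The star K_{1,n}, with center vertex 0 adjacent to n leaves. -/
def starGraph (n : ℕ) : SimpleGraph (Fin (n + 1)) where
  Adj x y := x ≠ y ∧ (x = 0 ∨ y = 0)
  symm := ⟨fun _ _ h => ⟨h.1.symm, h.2.symm⟩⟩
  loopless := ⟨fun _ h => h.1 rfl⟩

open Classical in
/-- δ(x,x') = 1 if x and x' lie in different connected components of the graph
obtained by deleting the edge ww', and 0 otherwise. -/
noncomputable def deltaEdge {V : Type*} (T : SimpleGraph V) (w w' x x' : V) : ℕ :=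
  if (T.deleteEdges {s(w, w')}).connectedComponentMk x =
      (T.deleteEdges {s(w, w')}).connectedComponentMk x' then 0 else 1

namespace RadioAux

variable {α β : Type*}


lemma dist_le_walk_length_boxProd {G : SimpleGraph α} {H : SimpleGraph β}
    (hG : G.Connected) (hH : H.Connected) {x y : α × β} (p : (G □ H).Walk x y) :
    G.dist x.1 y.1 + H.dist x.2 y.2 ≤ p.length := by
  induction p with
  | nil => simp
  | @cons u v w h p ih =>
    rw [SimpleGraph.boxProd_adj] at h
    rw [SimpleGraph.Walk.length_cons]
    rcases h with ⟨hadj, heq⟩ | ⟨hadj, heq⟩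
    · have h1 : G.dist u.1 w.1 ≤ 1 + G.dist v.1 w.1 := by
        calc G.dist u.1 w.1 ≤ G.dist u.1 v.1 + G.dist v.1 w.1 := hG.dist_triangle
        _ ≤ 1 + G.dist v.1 w.1 := by
            have : G.dist u.1 v.1 = 1 := SimpleGraph.dist_eq_one_iff_adj.mpr hadj
            omega
      have h2 : H.dist u.2 w.2 = H.dist v.2 w.2 := by rw [heq]
      omega
    · have h1 : H.dist u.2 w.2 ≤ 1 + H.dist v.2 w.2 := by
        calc H.dist u.2 w.2 ≤ H.dist u.2 v.2 + H.dist v.2 w.2 := hH.dist_triangle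
        _ ≤ 1 + H.dist v.2 w.2 := by
            have : H.dist u.2 v.2 = 1 := SimpleGraph.dist_eq_one_iff_adj.mpr hadj
            omega
      have h2 : G.dist u.1 w.1 = G.dist v.1 w.1 := by rw [heq]
      omega

lemma dist_boxProd {G : SimpleGraph α} {H : SimpleGraph β}
    (hG : G.Connected) (hH : H.Connected) (x y : α × β) :
    (G □ H).dist x y = G.dist x.1 y.1 + H.dist x.2 y.2 := by
  refine le_antisymm ?_ ?_
  · obtain ⟨p, hp⟩ := hG.exists_walk_length_eq_dist x.1 y.1
    obtain ⟨q, hq⟩ := hH.exists_walk_length_eq_dist x.2 y.2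
    have := SimpleGraph.dist_le
      ((p.boxProdLeft (H := H) x.2).append (q.boxProdRight G y.1))
    rw [SimpleGraph.Walk.length_append] at this
    have hl : (p.boxProdLeft (H := H) x.2).length = p.length := Walk.length_map _ _
    have hr : (q.boxProdRight G y.1).length = q.length := Walk.length_map _ _
    calc (G □ H).dist x y ≤ _ := this
    _ = G.dist x.1 y.1 + H.dist x.2 y.2 := by rw [hl, hr, hp, hq]
  · obtain ⟨p, hp⟩ := ((hG.boxProd hH)).exists_walk_length_eq_dist x y
    rw [← hp]
    exact dist_le_walk_length_boxProd hG hH p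


/-- natural-number absolute difference -/
def pd (i j : ℕ) : ℕ := (i - j) + (j - i)

lemma pd_le_walk_length {m : ℕ} {i j : Fin m} (p : (pathGraph m).Walk i j) :
    pd i.val j.val ≤ p.length := by
  induction p with
  | nil => simp [pd]
  | @cons u v w h p ih =>
    rw [pathGraph_adj] at h
    rw [SimpleGraph.Walk.length_cons]
    unfold pd at *
    omega

lemma exists_pathGraph_walk {m : ℕ} (d : ℕ) :
    ∀ i j : Fin m, i.val + d = j.val → ∃ p : (pathGraph m).Walk i j, p.length = d := by
  induction d with
  | zero =>
    intro i j h
    have : i = j := Fin.ext (by omega)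
    subst this
    exact ⟨SimpleGraph.Walk.nil, rfl⟩
  | succ d ih =>
    intro i j h
    have hlt : i.val + 1 < m := by have := j.isLt; omega
    set i' : Fin m := ⟨i.val + 1, hlt⟩ with hi'
    have hadj : (pathGraph m).Adj i i' := pathGraph_adj.mpr (Or.inl rfl)
    obtain ⟨p, hp⟩ := ih i' j (by simp [hi']; omega)
    exact ⟨SimpleGraph.Walk.cons hadj p, by simp [hp]⟩

lemma pathGraph_connected' {m : ℕ} (hm : 0 < m) : (pathGraph m).Connected := by
  have : Nonempty (Fin m) := ⟨⟨0, hm⟩⟩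
  exact ⟨pathGraph_preconnected m⟩

lemma pathGraph_dist {m : ℕ} (i j : Fin m) :
    (pathGraph m).dist i j = pd i.val j.val := by
  refine le_antisymm ?_ ?_
  · rcases le_total i.val j.val with hle | hle
    · obtain ⟨p, hp⟩ := exists_pathGraph_walk (j.val - i.val) i j (by omega)
      have := SimpleGraph.dist_le p
      unfold pd; omega
    · obtain ⟨p, hp⟩ := exists_pathGraph_walk (i.val - j.val) j i (by omega)
      have := SimpleGraph.dist_le p
      rw [SimpleGraph.dist_comm] at this
      unfold pd; omega
  · have hc : (pathGraph m).Connected := pathGraph_connected' (by have := i.isLt; omega)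
    obtain ⟨p, hp⟩ := hc.exists_walk_length_eq_dist i j
    rw [← hp]
    exact pd_le_walk_length p


/-- star distance -/
def sd {n : ℕ} (j j' : Fin (n + 1)) : ℕ :=
  if j = j' then 0 else if j = 0 ∨ j' = 0 then 1 else 2

lemma starGraph_adj {n : ℕ} {x y : Fin (n+1)} :
    (_root_.starGraph n).Adj x y ↔ x ≠ y ∧ (x = 0 ∨ y = 0) := Iff.rfl

lemma starGraph_connected (n : ℕ) : (_root_.starGraph n).Connected := by
  constructor
  intro u v
  by_cases huv : u = v
  · subst huv; exact SimpleGraph.Reachable.refl u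
  by_cases hu : u = 0
  · exact (starGraph_adj.mpr ⟨huv, Or.inl hu⟩).reachable
  by_cases hv : v = 0
  · exact (starGraph_adj.mpr ⟨huv, Or.inr hv⟩).reachable
  · exact ((starGraph_adj.mpr ⟨hu, Or.inr rfl⟩ :
      (_root_.starGraph n).Adj u 0)).reachable.trans
      ((starGraph_adj.mpr ⟨Ne.symm hv, Or.inl rfl⟩ :
      (_root_.starGraph n).Adj 0 v)).reachable

lemma starGraph_dist {n : ℕ} (j j' : Fin (n+1)) :
    (_root_.starGraph n).dist j j' = sd j j' := by
  unfold sd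
  split_ifs with h1 h2
  · subst h1; exact SimpleGraph.dist_self
  · exact SimpleGraph.dist_eq_one_iff_adj.mpr ⟨h1, h2⟩
  · push_neg at h2
    have hle : (_root_.starGraph n).dist j j' ≤ 2 := by
      have := SimpleGraph.dist_le
        (SimpleGraph.Walk.cons (starGraph_adj.mpr ⟨h2.1, Or.inr rfl⟩)
          (SimpleGraph.Walk.cons (starGraph_adj.mpr ⟨Ne.symm h2.2, Or.inl rfl⟩)
            SimpleGraph.Walk.nil))
      simpa using this
    have h0 : (_root_.starGraph n).dist j j' ≠ 0 := by
      have := (starGraph_connected n).pos_dist_of_ne h1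
      omega
    have hne1 : (_root_.starGraph n).dist j j' ≠ 1 := by
      intro hc
      have : (_root_.starGraph n).Adj j j' := SimpleGraph.dist_eq_one_iff_adj.mp hc
      rcases this.2 with h | h
      · exact h2.1 h
      · exact h2.2 h
    omega


section PS
variable (m n : ℕ)

lemma PS_dist (hm : 0 < m) (u v : Fin m × Fin (n+1)) :
    (pathGraph m □ _root_.starGraph n).dist u v = pd u.1.val v.1.val + sd u.2 v.2 := by
  rw [dist_boxProd (pathGraph_connected' hm) (starGraph_connected n),
    pathGraph_dist, starGraph_dist]

lemma sd_le_two {n : ℕ} (j j' : Fin (n+1)) : sd j j' ≤ 2 := by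
  unfold sd; split_ifs <;> omega

lemma PS_diam (hm : 3 ≤ m) (hn : 3 ≤ n) :
    graphDiam (pathGraph m □ _root_.starGraph n) = m + 1 := by
  apply le_antisymm
  · apply Finset.sup_le
    intro p _
    rw [PS_dist m n (by omega)]
    have h1 : pd p.1.1.val p.2.1.val ≤ m - 1 := by
      have := p.1.1.isLt; have := p.2.1.isLt; unfold pd; omega
    have := sd_le_two p.1.2 p.2.2
    omega
  · have hn1 : (1:ℕ) < n+1 := by omega
    have hn2 : (2:ℕ) < n+1 := by omega
    have := Finset.le_sup (f := fun p : (Fin m × Fin (n+1)) × (Fin m × Fin (n+1)) =>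
      (pathGraph m □ _root_.starGraph n).dist p.1 p.2)
      (Finset.mem_univ (((⟨0, by omega⟩, ⟨1, hn1⟩), (⟨m-1, by omega⟩, ⟨2, hn2⟩))))
    simp only at this
    rw [PS_dist m n (by omega)] at this
    unfold graphDiam
    have hd : pd (0:ℕ) (m-1) = m - 1 := by unfold pd; omega
    have hs : sd (⟨1, hn1⟩ : Fin (n+1)) ⟨2, hn2⟩ = 2 := by
      unfold sd
      rw [if_neg (by simp [Fin.ext_iff]), if_neg]
      push_neg
      constructor <;> simp [Fin.ext_iff]
    simp only [hd, hs] at this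
    omega
end PS

section LB
variable (m n : ℕ)

/-- level of path coordinate -/
def Lv (i : ℕ) : ℕ := if i < m/2 then m/2 - 1 - i else i - m/2

/-- weight of a vertex -/
def wV (v : Fin m × Fin (n+1)) : ℕ := Lv m v.1.val + (if v.2 = 0 then 0 else 1)

lemma dist_le_w (hm : 3 ≤ m) (heven : Even m) (u v : Fin m × Fin (n+1)) :
    (pathGraph m □ _root_.starGraph n).dist u v ≤ wV m n u + wV m n v + 1 := by
  rw [PS_dist m n (by omega)]
  obtain ⟨k, hk⟩ := heven
  have h1 : pd u.1.val v.1.val ≤ Lv m u.1.val + Lv m v.1.val + 1 := by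
    have := u.1.isLt; have := v.1.isLt
    unfold pd Lv; split_ifs <;> omega
  have h2 : sd u.2 v.2 ≤ (if u.2 = 0 then 0 else 1) + (if v.2 = 0 then 0 else 1) := by
    unfold sd
    split_ifs <;> simp_all
  unfold wV
  omega

lemma sum_Lv (heven : Even m) :
    ∑ i : Fin m, Lv m i.val = m/2 * (m/2 - 1) := by
  obtain ⟨k, hk⟩ := heven
  have hk2 : m / 2 = k := by omega
  rw [Fin.sum_univ_eq_sum_range (fun i => Lv m i)]
  have hsplit : ∑ i ∈ range m, Lv m i
      = ∑ i ∈ range k, Lv m i + ∑ i ∈ range k, Lv m (k + i) := by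
    have : m = k + k := by omega
    rw [this, Finset.sum_range_add]
  rw [hsplit]
  have e1 : ∑ i ∈ range k, Lv m i = ∑ i ∈ range k, (k - 1 - i) := by
    apply Finset.sum_congr rfl
    intro i hi
    rw [Finset.mem_range] at hi
    unfold Lv
    rw [if_pos (by omega), hk2]
  have e2 : ∑ i ∈ range k, Lv m (k + i) = ∑ i ∈ range k, i := by
    apply Finset.sum_congr rfl
    intro i hi
    rw [Finset.mem_range] at hi
    unfold Lv
    rw [if_neg (by omega), hk2]
    omega
  have e3 : ∑ i ∈ range k, (k - 1 - i) = ∑ i ∈ range k, i := by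
    simpa using Finset.sum_range_reflect (fun i => i) k
  have h4 := Finset.sum_range_id_mul_two k
  rw [e1, e2, e3, hk2]
  omega

lemma sum_sv : ∑ j : Fin (n+1), (if j = 0 then 0 else 1) = n := by
  rw [Fin.sum_univ_succ]
  simp [Fin.succ_ne_zero]

lemma sum_wV (heven : Even m) :
    ∑ v : Fin m × Fin (n+1), wV m n v = (n+1) * (m/2 * (m/2 - 1)) + m * n := by
  rw [Fintype.sum_prod_type]
  have e1 : ∀ i : Fin m, ∑ j : Fin (n+1), wV m n (i, j) = (n+1) * Lv m i.val + n := by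
    intro i
    unfold wV
    simp only
    rw [Finset.sum_add_distrib, Finset.sum_const, sum_sv]
    simp [mul_comm]
  rw [Finset.sum_congr rfl (fun i _ => e1 i), Finset.sum_add_distrib,
    ← Finset.mul_sum, sum_Lv m heven, Finset.sum_const]
  simp [Finset.card_univ, mul_comm]

lemma lower_bound (hm : 3 ≤ m) (hn : 3 ≤ n) (heven : Even m)
    (f : Fin m × Fin (n+1) → ℕ)
    (hf : IsRadioLabeling (pathGraph m □ _root_.starGraph n) f) :
    m/2 * m * (n+1) + m - 1 ≤ radioSpan f := by
  classical
  obtain ⟨k, hk⟩ := heven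
  set G := pathGraph m □ _root_.starGraph n with hG
  set N := m * (n+1) with hN
  have hN0 : 0 < N := by positivity
  have hcard : Fintype.card (Fin m × Fin (n+1)) = N := by simp [hN]
  have hdist_le_diam : ∀ u v : Fin m × Fin (n+1), G.dist u v ≤ graphDiam G := by
    intro u v
    exact Finset.le_sup
      (f := fun p : (Fin m × Fin (n+1)) × (Fin m × Fin (n+1)) => G.dist p.1 p.2)
      (Finset.mem_univ (u, v))
  have hdiam : graphDiam G = m + 1 := PS_diam m n hm hn
  -- f is injective
  have hinj : Function.Injective f := by
    intro u v huv
    by_contra hne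
    have h1 := hf u v hne
    rw [huv] at h1
    simp only [sub_self, abs_zero] at h1
    have h2 := hdist_le_diam u v
    omega
  -- a monotone enumeration
  let e : (Fin m × Fin (n+1)) ≃ Fin N := Fintype.equivFinOfCardEq hcard
  let σ : Fin N ≃ (Fin m × Fin (n+1)) := (Tuple.sort (f ∘ e.symm)).trans e.symm
  have hmonot : Monotone (f ∘ σ) := Tuple.monotone_sort (f ∘ e.symm)
  have hsm : StrictMono (f ∘ σ) :=
    hmonot.strictMono_of_injective (hinj.comp σ.injective)
  -- natural-number indexing
  let u : ℕ → Fin m × Fin (n+1) := fun t => σ ⟨t % N, Nat.mod_lt _ hN0⟩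
  let g : ℕ → ℕ := fun t => f (u t)
  have hg_mono : ∀ s t : ℕ, s < t → t < N → g s < g t := by
    intro s t hst htN
    have : (⟨s % N, Nat.mod_lt _ hN0⟩ : Fin N) < ⟨t % N, Nat.mod_lt _ hN0⟩ := by
      rw [Fin.mk_lt_mk, Nat.mod_eq_of_lt (by omega), Nat.mod_eq_of_lt htN]
      exact hst
    exact hsm this
  -- step lower bound
  have hstep : ∀ t : ℕ, t + 1 < N →
      (m+1 : ℤ) - wV m n (u t) - wV m n (u (t+1)) ≤ (g (t+1) : ℤ) - g t := by
    intro t ht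
    have hne : u (t+1) ≠ u t := by
      intro hc
      have := hg_mono t (t+1) (by omega) ht
      simp only [g, hc] at this
      omega
    have h1 := hf (u (t+1)) (u t) hne
    rw [hdiam] at h1
    have h2 : G.dist (u (t+1)) (u t) ≤ wV m n (u (t+1)) + wV m n (u t) + 1 :=
      dist_le_w m n hm ⟨k, hk⟩ _ _
    have h3 : (f (u t) : ℤ) < f (u (t+1)) := by
      exact_mod_cast hg_mono t (t+1) (by omega) ht
    rw [abs_of_pos (by omega : (0:ℤ) < (f (u (t+1)) : ℤ) - f (u t))] at h1
    have h2' : (G.dist (u (t+1)) (u t) : ℤ) ≤ wV m n (u (t+1)) + wV m n (u t) + 1 := by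
      exact_mod_cast h2
    simp only [g]
    push_cast at h1
    omega
  -- sums of weights
  have hsumw : ∑ t ∈ range N, wV m n (u t) = (n+1) * (m/2 * (m/2 - 1)) + m * n := by
    rw [← sum_wV m n ⟨k, hk⟩]
    rw [← Equiv.sum_comp σ (wV m n)]
    rw [← Fin.sum_univ_eq_sum_range (fun t => wV m n (u t)) N]
    apply Finset.sum_congr rfl
    intro i _
    have hieq : (⟨(i : ℕ) % N, Nat.mod_lt _ hN0⟩ : Fin N) = i := by
      ext
      simp [Nat.mod_eq_of_lt i.isLt]
    simp only [u, hieq]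
  set W := (n+1) * (m/2 * (m/2 - 1)) + m * n with hW
  have hsum1 : ∑ t ∈ range (N-1), wV m n (u t) ≤ W := by
    rw [← hsumw]
    exact Finset.sum_le_sum_of_subset (Finset.range_subset_range.mpr (by omega))
  have hsum2 : ∑ t ∈ range (N-1), wV m n (u (t+1)) ≤ W := by
    have h5 := Finset.sum_range_succ' (fun t => wV m n (u t)) (N-1)
    rw [(by omega : N - 1 + 1 = N)] at h5
    rw [← hsumw, h5]
    omega
  -- telescoping
  have htel : (g (N-1) : ℤ) - g 0 = ∑ t ∈ range (N-1), ((g (t+1) : ℤ) - g t) := by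
    rw [Finset.sum_range_sub (fun t => (g t : ℤ)) (N-1)]
  have hbound : ((N:ℤ)-1) * (m+1) - 2*W ≤ (g (N-1) : ℤ) - g 0 := by
    rw [htel]
    have h1 : ∑ t ∈ range (N-1), ((m+1 : ℤ) - wV m n (u t) - wV m n (u (t+1)))
        ≤ ∑ t ∈ range (N-1), ((g (t+1) : ℤ) - g t) := by
      apply Finset.sum_le_sum
      intro t ht
      rw [Finset.mem_range] at ht
      exact hstep t (by omega)
    refine le_trans ?_ h1
    rw [Finset.sum_sub_distrib, Finset.sum_sub_distrib, Finset.sum_const,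
      Finset.card_range, nsmul_eq_mul]
    have c1 : (∑ t ∈ range (N-1), (wV m n (u t) : ℤ)) ≤ W := by
      exact_mod_cast hsum1
    have c2 : (∑ t ∈ range (N-1), (wV m n (u (t+1)) : ℤ)) ≤ W := by
      exact_mod_cast hsum2
    have hc : ((N - 1 : ℕ) : ℤ) = (N:ℤ) - 1 := by omega
    rw [hc]
    omega
  -- arithmetic
  set P := m/2 * m * (n+1) with hP
  have h2k : ((m/2 : ℕ) : ℤ) = (k:ℤ) := by omega
  have hkpos : 1 ≤ k := by omega
  have key : (P:ℤ) + m - 1 ≤ (g (N-1) : ℤ) - g 0 := by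
    refine le_trans ?_ hbound
    have hPk : P = k * m * (n+1) := by
      rw [hP]
      have : m / 2 = k := by omega
      rw [this]
    have hWk : W = (n+1) * (k*(k-1)) + m*n := by
      rw [hW]
      have : m / 2 = k := by omega
      rw [this]
    have hPZ : (P:ℤ) = (k:ℤ) * m * (n+1) := by
      rw [hPk]; push_cast; ring
    have hWZ : (W:ℤ) = ((n:ℤ)+1) * (k * ((k:ℤ)-1)) + m*n := by
      rw [hWk]
      push_cast [Nat.cast_sub hkpos]
      ring
    have hNZ : ((N:ℕ):ℤ) = (m:ℤ)*(n+1) := by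
      rw [hN]; push_cast; ring
    have hmZ : (m:ℤ) = 2*k := by omega
    rw [hPZ, hWZ, hNZ, hmZ]
    exact le_of_eq (by ring)
  have hspan : (g (N-1) : ℤ) - g 0 ≤ radioSpan f := by
    have hle := Finset.le_sup
      (f := fun p : (Fin m × Fin (n+1)) × (Fin m × Fin (n+1)) =>
        ((f p.1 : ℤ) - (f p.2 : ℤ)).natAbs)
      (Finset.mem_univ ((u (N-1)), (u 0)))
    have h6 : ((g (N-1) : ℤ) - g 0).natAbs ≤ radioSpan f := hle
    omega
  have hm1 : 1 ≤ m := by omega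
  omega

end LB

/-! ### The explicit optimal labeling -/

/-- cyclic pattern 0,2,1 -/
def cyc (i : ℕ) : ℕ := if i % 3 = 0 then 0 else if i % 3 = 1 then 2 else 1

/-- star offset by position -/
def cP (m n p : ℕ) : ℕ := if p = m - 1 then n else cyc p

/-- star offset by round -/
def aR (n r : ℕ) : ℕ := if r = 0 then 0 else if r = n then 1 else r + 1

/-- inverse of `aR` -/
def aInv (n y : ℕ) : ℕ := if y = 0 then 0 else if y = 1 then n else y - 1

/-- star coordinate at round `r`, position `p` -/
def jf (m n r p : ℕ) : ℕ := (aR n r + cP m n p) % (n+1)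

/-- path coordinate at position `p` -/
def col (m p : ℕ) : ℕ := if p % 2 = 0 then m/2 - 1 - p/2 else m - 1 - p/2

/-- path-level at position `p` -/
def Lw (m p : ℕ) : ℕ := if p % 2 = 0 then p/2 else m/2 - 1 - p/2

/-- weight at time `t` -/
def ww (m n t : ℕ) : ℕ :=
  Lw m (t % m) + (if jf m n (t / m) (t % m) = 0 then 0 else 1)

/-- the gap between consecutive labels -/
def gap (m n t : ℕ) : ℕ := (m + 1) - ww m n t - ww m n (t+1)

/-- partial sums of gaps: the label of the `t`-th vertex -/
def FF (m n t : ℕ) : ℕ := ∑ i ∈ Finset.range t, gap m n i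

/-- position of a path coordinate -/
def posOf (m x : ℕ) : ℕ := if x < m/2 then 2*(m/2 - 1 - x) else 2*(m - 1 - x) + 1

/-- round of a vertex -/
def rOf (m n p j : ℕ) : ℕ := aInv n ((j + (n+1) - cP m n p) % (n+1))

section Cons

variable (m n : ℕ)

lemma cyc_lt : cyc m < 3 := by unfold cyc; split_ifs <;> first | omega | simp_all

lemma cP_le (hn : 3 ≤ n) (p : ℕ) : cP m n p ≤ n := by
  unfold cP
  have := cyc_lt p
  split_ifs <;> first | omega | simp_all

lemma aR_le (r : ℕ) (hr : r ≤ n) : aR n r ≤ n := by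
  unfold aR; split_ifs <;> first | omega | simp_all

lemma aInv_le (y : ℕ) (hy : y ≤ n) : aInv n y ≤ n := by
  unfold aInv; split_ifs <;> first | omega | simp_all

lemma col_lt (hm : 0 < m) (p : ℕ) : col m p < m := by
  unfold col; split_ifs <;> first | omega | simp_all

lemma jf_lt (p r : ℕ) : jf m n r p < n + 1 := Nat.mod_lt _ (by omega)

/-- vertex at time t -/
def ordV (hm : 0 < m) (t : ℕ) : Fin m × Fin (n+1) :=
  (⟨col m (t % m), col_lt m hm _⟩, ⟨jf m n (t / m) (t % m), jf_lt m n _ _⟩)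

/-- time of a vertex -/
def invV (v : Fin m × Fin (n+1)) : ℕ :=
  rOf m n (posOf m v.1.val) v.2.val * m + posOf m v.1.val

lemma posOf_lt (hm : 3 ≤ m) (heven : Even m) (x : ℕ) (hx : x < m) : posOf m x < m := by
  obtain ⟨k, hk⟩ := heven
  unfold posOf; split_ifs <;> first | omega | simp_all

lemma aR_aInv (hn : 3 ≤ n) (y : ℕ) (hy : y ≤ n) : aR n (aInv n y) = y := by
  unfold aR aInv; split_ifs <;> first | omega | simp_all

lemma aInv_aR (hn : 3 ≤ n) (r : ℕ) (hr : r ≤ n) : aInv n (aR n r) = r := by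
  unfold aR aInv
  by_cases h0 : r = 0
  · simp [h0]
  · by_cases h1 : r = n
    · rw [if_neg h0, if_pos h1, if_neg (by omega), if_pos rfl]
      omega
    · rw [if_neg h0, if_neg h1, if_neg (by omega), if_neg (by omega)]
      omega

lemma rOf_le (hn : 3 ≤ n) (p j : ℕ) (hj : j ≤ n) : rOf m n p j ≤ n :=
  aInv_le n _ (Nat.le_of_lt_succ (Nat.mod_lt _ (by omega)))

lemma invV_lt (hm : 3 ≤ m) (hn : 3 ≤ n) (heven : Even m) (v : Fin m × Fin (n+1)) :
    invV m n v < m * (n+1) := by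
  have h1 := posOf_lt m hm heven v.1.val v.1.isLt
  have h2 := rOf_le m n hn (posOf m v.1.val) v.2.val (Nat.le_of_lt_succ v.2.isLt)
  have : rOf m n (posOf m v.1.val) v.2.val * m ≤ n * m := by
    exact Nat.mul_le_mul_right m h2
  unfold invV
  calc rOf m n (posOf m v.1.val) v.2.val * m + posOf m v.1.val
      < rOf m n (posOf m v.1.val) v.2.val * m + m := by omega
    _ ≤ n * m + m := by omega
    _ = m * (n+1) := by ring

lemma col_posOf (hm : 3 ≤ m) (heven : Even m) (x : ℕ) (hx : x < m) :
    col m (posOf m x) = x := by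
  obtain ⟨k, hk⟩ := heven
  unfold col posOf
  split_ifs <;> first | omega | simp_all

lemma posOf_col (hm : 3 ≤ m) (heven : Even m) (p : ℕ) (hp : p < m) :
    posOf m (col m p) = p := by
  obtain ⟨k, hk⟩ := heven
  unfold col posOf
  split_ifs <;> first | omega | simp_all

lemma jf_rOf (hn : 3 ≤ n) (p j : ℕ) (hj : j ≤ n) :
    jf m n (rOf m n p j) p = j := by
  have hcp : cP m n p ≤ n := cP_le m n hn p
  unfold jf rOf
  rw [aR_aInv n hn _ (Nat.le_of_lt_succ (Nat.mod_lt _ (by omega)))]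
  rw [Nat.mod_add_mod]
  have : j + (n+1) - cP m n p + cP m n p = j + (n+1) := by omega
  rw [this, Nat.add_mod_right, Nat.mod_eq_of_lt (by omega)]

lemma rOf_jf (hn : 3 ≤ n) (p r : ℕ) (hr : r ≤ n) :
    rOf m n p (jf m n r p) = r := by
  have hcp : cP m n p ≤ n := cP_le m n hn p
  have har : aR n r ≤ n := aR_le n r hr
  unfold rOf jf
  have h1 : (aR n r + cP m n p) % (n+1) + (n+1) - cP m n p
      = (aR n r + cP m n p) % (n+1) + ((n+1) - cP m n p) := by omega
  rw [h1, Nat.mod_add_mod]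
  have h2 : aR n r + cP m n p + ((n+1) - cP m n p) = aR n r + (n+1) := by omega
  rw [h2, Nat.add_mod_right, Nat.mod_eq_of_lt (by omega)]
  exact aInv_aR n hn r hr

lemma ordV_invV (hm : 3 ≤ m) (hn : 3 ≤ n) (heven : Even m) (v : Fin m × Fin (n+1)) :
    ordV m n (by omega) (invV m n v) = v := by
  have hp := posOf_lt m hm heven v.1.val v.1.isLt
  have hmod : invV m n v % m = posOf m v.1.val := by
    unfold invV
    rw [Nat.mul_add_mod']
    exact Nat.mod_eq_of_lt hp
  have hdiv : invV m n v / m = rOf m n (posOf m v.1.val) v.2.val := by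
    unfold invV
    rw [Nat.mul_comm, Nat.mul_add_div (by omega), Nat.div_eq_of_lt hp]
    omega
  unfold ordV
  have h1 : col m (invV m n v % m) = v.1.val := by
    rw [hmod]
    exact col_posOf m hm heven v.1.val v.1.isLt
  have h2 : jf m n (invV m n v / m) (invV m n v % m) = v.2.val := by
    rw [hmod, hdiv]
    exact jf_rOf m n hn _ v.2.val (Nat.le_of_lt_succ v.2.isLt)
  exact Prod.ext_iff.mpr ⟨Fin.ext h1, Fin.ext h2⟩

lemma invV_ordV (hm : 3 ≤ m) (hn : 3 ≤ n) (heven : Even m) (t : ℕ)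
    (ht : t < m * (n+1)) :
    invV m n (ordV m n (by omega) t) = t := by
  have hp : t % m < m := Nat.mod_lt _ (by omega)
  have hr : t / m ≤ n := by
    have h1 : t < (n+1) * m := by rw [Nat.mul_comm] at ht; omega
    have := (Nat.div_lt_iff_lt_mul (by omega : 0 < m)).mpr h1
    omega
  unfold invV ordV
  simp only
  rw [posOf_col m hm heven _ hp, rOf_jf m n hn _ _ hr, Nat.div_add_mod']

/-! ### step decomposition -/

lemma succ_mod_div (hm : 0 < m) (t : ℕ) :
    (t+1) % m = (t % m + 1) % m ∧ (t+1) / m = t / m + (t % m + 1) / m := by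
  have hd := Nat.div_add_mod t m
  constructor
  · conv_lhs => rw [← hd]
    rw [Nat.add_assoc, Nat.mul_add_mod]
  · conv_lhs => rw [← hd]
    rw [Nat.add_assoc, Nat.mul_add_div hm]

lemma step_cases (hm : 0 < m) (t : ℕ) :
    (t % m + 1 < m ∧ (t+1) % m = t % m + 1 ∧ (t+1)/m = t/m) ∨
    (t % m = m - 1 ∧ (t+1) % m = 0 ∧ (t+1)/m = t/m + 1) := by
  obtain ⟨h1, h2⟩ := succ_mod_div m hm t
  have h := Nat.mod_lt t hm
  by_cases hc : t % m + 1 < m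
  · exact Or.inl ⟨hc, by rw [h1, Nat.mod_eq_of_lt hc], by rw [h2, Nat.div_eq_of_lt hc]; omega⟩

  · have he : t % m + 1 = m := by omega
    exact Or.inr ⟨by omega, by rw [h1, he, Nat.mod_self],
      by rw [h2, he, Nat.div_self hm]⟩

/-! ### star coordinate distinctness -/

lemma jf_ne_of_cP_ne (hn : 3 ≤ n) (r p q : ℕ) (h : cP m n p ≠ cP m n q) :
    jf m n r p ≠ jf m n r q := by
  intro hc
  unfold jf at hc
  have h1 : cP m n p ≡ cP m n q [MOD n+1] :=
    Nat.ModEq.add_left_cancel' (aR n r) hc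
  have hp := cP_le m n hn p
  have hq := cP_le m n hn q
  unfold Nat.ModEq at h1
  rw [Nat.mod_eq_of_lt (by omega), Nat.mod_eq_of_lt (by omega)] at h1
  exact h h1

lemma cP_ne_succ (hm : 4 ≤ m) (hn : 3 ≤ n) (p : ℕ) (hp : p + 1 ≤ m - 1) :
    cP m n p ≠ cP m n (p+1) := by
  unfold cP
  have h1 := cyc_lt p
  have h2 := cyc_lt (p+1)
  rw [if_neg (by omega)]
  by_cases hc : p + 1 = m - 1
  · rw [if_pos hc]; omega
  · rw [if_neg hc]; unfold cyc; split_ifs <;> first | omega | simp_all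

lemma cP_ne_succ2 (hm : 4 ≤ m) (hn : 3 ≤ n) (p : ℕ) (hp : p + 2 ≤ m - 1) :
    cP m n p ≠ cP m n (p+2) := by
  unfold cP
  have h1 := cyc_lt p
  have h2 := cyc_lt (p+2)
  rw [if_neg (by omega)]
  by_cases hc : p + 2 = m - 1
  · rw [if_pos hc]; omega
  · rw [if_neg hc]; unfold cyc; split_ifs <;> first | omega | simp_all

lemma add_n_mod (hn : 3 ≤ n) (x : ℕ) (hx : x ≤ n) :
    (x + n) % (n+1) = if x = 0 then n else x - 1 := by
  by_cases h : x = 0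
  · rw [h, if_pos rfl, Nat.zero_add, Nat.mod_eq_of_lt (by omega)]
  · rw [if_neg h]
    have : x + n = (n+1) + (x-1) := by omega
    rw [this, Nat.add_mod_left, Nat.mod_eq_of_lt (by omega)]

lemma jf_junction_ne (hm : 4 ≤ m) (hn : 3 ≤ n) (r : ℕ) (hr : r + 1 ≤ n) :
    jf m n r (m-1) ≠ jf m n (r+1) 0 := by
  unfold jf
  have hc1 : cP m n (m-1) = n := by unfold cP; rw [if_pos rfl]
  have hc0 : cP m n 0 = 0 := by
    unfold cP
    rw [if_neg (by omega)]
    unfold cyc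
    norm_num
  rw [hc1, hc0]
  rw [add_n_mod n hn _ (aR_le n r (by omega))]
  simp only [Nat.add_zero]
  have h2 : aR n (r+1) % (n+1) = aR n (r+1) := Nat.mod_eq_of_lt (by
    have := aR_le n (r+1) hr; omega)
  rw [h2]
  unfold aR
  split_ifs <;> first | omega | simp_all

/-! ### numeric distance: star part -/

def sdN (a b : ℕ) : ℕ := if a = b then 0 else if a = 0 ∨ b = 0 then 1 else 2

lemma sdN_of_ne (a b : ℕ) (h : a ≠ b) :
    (if a = 0 then 0 else 1) + (if b = 0 then 0 else 1) ≤ sdN a b := by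
  unfold sdN; split_ifs <;> first | omega | simp_all

/-! ### weight bounds -/

lemma Lw_le (heven : Even m) (hm : 3 ≤ m) (t : ℕ) : Lw m (t % m) ≤ m/2 - 1 := by
  obtain ⟨k, hk⟩ := heven
  have h := Nat.mod_lt t (show 0 < m by omega)
  unfold Lw; split_ifs <;> first | omega | simp_all

lemma ww_le (heven : Even m) (hm : 3 ≤ m) (t : ℕ) : ww m n t ≤ m/2 := by
  have h1 := Lw_le m heven hm t
  unfold ww; split_ifs <;> first | omega | simp_all

lemma gap_ww (heven : Even m) (hm : 3 ≤ m) (t : ℕ) :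
    gap m n t + ww m n t + ww m n (t+1) = m + 1 := by
  have h1 := ww_le m n heven hm t
  have h2 := ww_le m n heven hm (t+1)
  unfold gap
  omega

lemma gap_pos (heven : Even m) (hm : 3 ≤ m) (t : ℕ) : 1 ≤ gap m n t := by
  have h1 := ww_le m n heven hm t
  have h2 := ww_le m n heven hm (t+1)
  unfold gap
  omega

/-! ### the three key inequalities -/


lemma round_le (hm : 0 < m) (t : ℕ) (ht : t < m*(n+1)) : t / m ≤ n := by
  have h1 : t < (n+1) * m := by rw [Nat.mul_comm]; omega
  have := (Nat.div_lt_iff_lt_mul hm).mpr h1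
  omega

lemma sIf_le (r p : ℕ) : (if jf m n r p = 0 then 0 else 1) ≤ 1 := by
  split_ifs <;> first | omega | simp_all

lemma key_step (hm : 3 ≤ m) (hn : 3 ≤ n) (heven : Even m) (t : ℕ)
    (ht : t + 1 < m*(n+1)) :
    ww m n t + ww m n (t+1) + 1
      ≤ pd (col m (t % m)) (col m ((t+1) % m))
        + sdN (jf m n (t/m) (t%m)) (jf m n ((t+1)/m) ((t+1)%m)) := by
  obtain ⟨k, hk⟩ := heven
  have hm4 : 4 ≤ m := by omega
  have hp := Nat.mod_lt t (show 0 < m by omega)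
  rcases step_cases m (by omega) t with ⟨h1, h2, h3⟩ | ⟨h1, h2, h3⟩
  · have hne : jf m n (t/m) (t%m) ≠ jf m n ((t+1)/m) ((t+1)%m) := by
      rw [h2, h3]
      exact jf_ne_of_cP_ne m n hn _ _ _ (cP_ne_succ m n hm4 hn _ (by omega))
    have hsd := sdN_of_ne _ _ hne
    have hpd : pd (col m (t % m)) (col m ((t+1) % m))
        = Lw m (t % m) + Lw m ((t+1) % m) + 1 := by
      rw [h2]
      unfold pd col Lw
      split_ifs <;> first | omega | simp_all
    unfold ww
    rw [hpd]
    omega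
  · have hr1 : (t+1)/m ≤ n := round_le m n (by omega) (t+1) ht
    have hne : jf m n (t/m) (t%m) ≠ jf m n ((t+1)/m) ((t+1)%m) := by
      rw [h1, h2, h3]
      exact jf_junction_ne m n hm4 hn (t/m) (by omega)
    have hsd := sdN_of_ne _ _ hne
    have hpd : pd (col m (t % m)) (col m ((t+1) % m))
        = Lw m (t % m) + Lw m ((t+1) % m) + 1 := by
      rw [h1, h2]
      unfold pd col Lw
      split_ifs <;> first | omega | simp_all
    unfold ww
    rw [hpd]
    omega

lemma sdN_skip (a b c : ℕ) (h : a ≠ c) :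
    (if a = 0 then 0 else 1) + 2*(if b = 0 then 0 else 1) + (if c = 0 then 0 else 1)
      ≤ 2 + sdN a c := by
  unfold sdN; split_ifs <;> first | omega | simp_all

lemma key_skip2 (hm : 3 ≤ m) (hn : 3 ≤ n) (heven : Even m) (t : ℕ)
    (ht : t + 2 < m*(n+1)) :
    ww m n t + 2 * ww m n (t+1) + ww m n (t+2)
      ≤ m + pd (col m (t % m)) (col m ((t+2) % m))
        + sdN (jf m n (t/m) (t%m)) (jf m n ((t+2)/m) ((t+2)%m)) := by
  obtain ⟨k, hk⟩ := heven
  have hm4 : 4 ≤ m := by omega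
  have hp := Nat.mod_lt t (show 0 < m by omega)
  have hs0 := sIf_le m n (t/m) (t%m)
  have hs1 := sIf_le m n ((t+1)/m) ((t+1)%m)
  have hs2 := sIf_le m n ((t+2)/m) ((t+2)%m)
  rcases step_cases m (by omega) t with ⟨h1, h2, h3⟩ | ⟨h1, h2, h3⟩ <;>
    rcases step_cases m (by omega) (t+1) with ⟨g1, g2, g3⟩ | ⟨g1, g2, g3⟩
  · -- within, within
    have hne : jf m n (t/m) (t%m) ≠ jf m n ((t+2)/m) ((t+2)%m) := by
      rw [show t+1+1 = t+2 from rfl] at g2 g3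
      rw [g2, g3, h2, h3]
      exact jf_ne_of_cP_ne m n hn _ _ _ (cP_ne_succ2 m n hm4 hn _ (by omega))
    have hsd := sdN_skip (jf m n (t/m) (t%m)) (jf m n ((t+1)/m) ((t+1)%m))
      (jf m n ((t+2)/m) ((t+2)%m)) hne
    have hpd : pd (col m (t % m)) (col m ((t+2) % m)) = 1 := by
      rw [show t+1+1 = t+2 from rfl] at g2
      rw [g2, h2]
      unfold pd col
      split_ifs <;> first | omega | simp_all
    have hL : Lw m (t%m) + 2 * Lw m ((t+1)%m) + Lw m ((t+2)%m) = 2*(m/2) - 1 := by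
      rw [show t+1+1 = t+2 from rfl] at g2
      rw [g2, h2]
      unfold Lw
      split_ifs <;> first | omega | simp_all
    unfold ww
    rw [hpd]
    omega
  · -- within, junction : t % m = m - 2
    have hps : t % m = m - 2 := by omega
    have hpd : pd (col m (t % m)) (col m ((t+2) % m)) = m/2 - 1 := by
      rw [show t+1+1 = t+2 from rfl] at g2
      rw [g2, hps]
      unfold pd col
      split_ifs <;> first | omega | simp_all
    have hL0 : Lw m (t%m) = m/2 - 1 := by
      rw [hps]; unfold Lw; split_ifs <;> first | omega | simp_all
    have hL1 : Lw m ((t+1)%m) = 0 := by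
      rw [h2, hps]; unfold Lw; split_ifs <;> first | omega | simp_all
    have hL2 : Lw m ((t+2)%m) = 0 := by
      rw [show t+1+1 = t+2 from rfl] at g2
      rw [g2]; unfold Lw; split_ifs <;> first | omega | simp_all
    have hsd : 0 ≤ sdN (jf m n (t/m) (t%m)) (jf m n ((t+2)/m) ((t+2)%m)) := Nat.zero_le _
    unfold ww
    rw [hpd]
    omega
  · -- junction, within : t % m = m - 1
    have hpd : pd (col m (t % m)) (col m ((t+2) % m)) = m/2 - 1 := by
      rw [show t+1+1 = t+2 from rfl] at g2
      rw [g2, h2, h1]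
      unfold pd col
      split_ifs <;> first | omega | simp_all
    have hL0 : Lw m (t%m) = 0 := by
      rw [h1]; unfold Lw; split_ifs <;> first | omega | simp_all
    have hL1 : Lw m ((t+1)%m) = 0 := by
      rw [h2]; unfold Lw; split_ifs <;> first | omega | simp_all
    have hL2 : Lw m ((t+2)%m) = m/2 - 1 := by
      rw [show t+1+1 = t+2 from rfl] at g2
      rw [g2, h2]; unfold Lw; split_ifs <;> first | omega | simp_all
    unfold ww
    rw [hpd]
    omega
  · omega

lemma key_window (hm : 3 ≤ m) (hn : 3 ≤ n) (heven : Even m) (t : ℕ)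
    (ht : t + 3 < m*(n+1)) :
    ww m n t + 2 * ww m n (t+1) + 2 * ww m n (t+2) + ww m n (t+3) ≤ 2*m + 2 := by
  obtain ⟨k, hk⟩ := heven
  have hm4 : 4 ≤ m := by omega
  have hp := Nat.mod_lt t (show 0 < m by omega)
  have hs0 := sIf_le m n (t/m) (t%m)
  have hs1 := sIf_le m n ((t+1)/m) ((t+1)%m)
  have hs2 := sIf_le m n ((t+2)/m) ((t+2)%m)
  have hs3 := sIf_le m n ((t+3)/m) ((t+3)%m)
  have e2 : t+1+1 = t+2 := rfl
  have e3 : t+2+1 = t+3 := rfl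
  have hL : Lw m (t%m) + 2 * Lw m ((t+1)%m) + 2 * Lw m ((t+2)%m) + Lw m ((t+3)%m)
      ≤ 2*m - 4 := by
    rcases step_cases m (by omega) t with ⟨h1, h2, h3⟩ | ⟨h1, h2, h3⟩ <;>
      rcases step_cases m (by omega) (t+1) with ⟨g1, g2, g3⟩ | ⟨g1, g2, g3⟩ <;>
      rcases step_cases m (by omega) (t+2) with ⟨f1, f2, f3⟩ | ⟨f1, f2, f3⟩ <;>
      rw [e2] at g2 g3 <;> rw [e3] at f2 f3 <;>
      first
      | omega
      | (rw [f2, g2, h2]; unfold Lw; split_ifs <;> first | omega | simp_all)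
      | (rw [f2, g2, h2, h1]; unfold Lw; split_ifs <;> first | omega | simp_all)
      | (rw [f2, g2, h2, hps]; unfold Lw; split_ifs <;> first | omega | simp_all)
  unfold ww
  omega

/-! ### sums and endpoints -/


lemma Lw_col (hm : 3 ≤ m) (heven : Even m) (p : ℕ) (hp : p < m) :
    Lv m (col m p) = Lw m p := by
  obtain ⟨k, hk⟩ := heven
  unfold Lv col Lw
  split_ifs <;> first | omega | simp_all

lemma ww_wV (hm : 3 ≤ m) (heven : Even m) (t : ℕ) :
    wV m n (ordV m n (by omega) t) = ww m n t := by
  unfold wV ordV ww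
  simp only
  have h1 : Lv m (col m (t % m)) = Lw m (t % m) :=
    Lw_col m hm heven _ (Nat.mod_lt _ (by omega))
  have h2 : ((⟨jf m n (t/m) (t%m), jf_lt m n _ _⟩ : Fin (n+1)) = 0)
      ↔ jf m n (t/m) (t%m) = 0 := by
    rw [Fin.ext_iff]
    simp
  rw [h1]
  by_cases hj : jf m n (t/m) (t%m) = 0
  · rw [if_pos (h2.mpr hj), if_pos hj]
  · rw [if_neg (fun hc => hj (h2.mp hc)), if_neg hj]

lemma sum_ww (hm : 3 ≤ m) (hn : 3 ≤ n) (heven : Even m) :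
    ∑ t ∈ range (m*(n+1)), ww m n t = ∑ v : Fin m × Fin (n+1), wV m n v := by
  refine Finset.sum_bij' (fun t _ => ordV m n (by omega) t)
    (fun v _ => invV m n v) (fun t _ => Finset.mem_univ _)
    (fun v _ => Finset.mem_range.mpr (invV_lt m n hm hn heven v))
    (fun t ht => invV_ordV m n hm hn heven t (Finset.mem_range.mp ht))
    (fun v _ => ordV_invV m n hm hn heven v)
    (fun t _ => (ww_wV m n hm heven t).symm)

lemma ww_zero (hm : 3 ≤ m) : ww m n 0 = 0 := by
  have h0 : (0:ℕ) % m = 0 := Nat.zero_mod m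
  have h1 : (0:ℕ) / m = 0 := Nat.zero_div m
  unfold ww
  rw [h0, h1]
  have hL : Lw m 0 = 0 := by unfold Lw; norm_num
  have hj : jf m n 0 0 = 0 := by
    unfold jf aR cP cyc
    rw [if_pos rfl, if_neg (by omega)]
    norm_num
  rw [hL, if_pos hj]

lemma ww_last (hm : 3 ≤ m) (hn : 3 ≤ n) (heven : Even m) :
    ww m n (m*(n+1) - 1) = 0 := by
  obtain ⟨k, hk⟩ := heven
  have he : m*(n+1) - 1 = m*n + (m-1) := by
    have : m*(n+1) = m*n + m := by ring
    omega
  have hmod : (m*(n+1) - 1) % m = m - 1 := by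
    rw [he, Nat.mul_add_mod, Nat.mod_eq_of_lt (by omega)]
  have hdiv : (m*(n+1) - 1) / m = n := by
    rw [he, Nat.mul_add_div (by omega), Nat.div_eq_of_lt (by omega)]
    omega
  unfold ww
  rw [hmod, hdiv]
  have hL : Lw m (m-1) = 0 := by
    unfold Lw; split_ifs <;> omega
  have hj : jf m n n (m-1) = 0 := by
    unfold jf aR cP
    rw [if_neg (by omega), if_pos rfl, if_pos rfl]
    have h9 : 1 + n = n + 1 := by omega
    rw [h9]
    exact Nat.mod_self _
  rw [hL, if_pos hj]

lemma FF_mono (a b : ℕ) (hab : a ≤ b) : FF m n a ≤ FF m n b := by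
  unfold FF
  exact Finset.sum_le_sum_of_subset (Finset.range_subset_range.mpr hab)

lemma FF_sub (a b : ℕ) (hab : a ≤ b) :
    FF m n b = FF m n a + ∑ i ∈ Finset.Ico a b, gap m n i := by
  unfold FF
  rw [← Nat.Ico_zero_eq_range, ← Finset.sum_Ico_consecutive _ (Nat.zero_le a) hab]
  rw [Finset.range_eq_Ico]

lemma span_identity (hm : 3 ≤ m) (hn : 3 ≤ n) (heven : Even m) :
    FF m n (m*(n+1) - 1) + 2 * ((n+1) * (m/2 * (m/2 - 1)) + m * n)
      = (m*(n+1) - 1)*(m+1) := by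
  set N := m*(n+1) with hN
  have hN1 : 1 ≤ N := by
    have : 0 < m*(n+1) := by positivity
    omega
  have hsum3 : ∑ t ∈ range (N-1), (gap m n t + ww m n t + ww m n (t+1))
      = (N-1)*(m+1) := by
    rw [Finset.sum_congr rfl (fun t _ => gap_ww m n heven hm t), Finset.sum_const,
      Finset.card_range, smul_eq_mul]
  have hs1 : ∑ t ∈ range N, ww m n t = ∑ t ∈ range (N-1), ww m n t + ww m n (N-1) := by
    conv_lhs => rw [(by omega : N = (N-1) + 1)]
    rw [Finset.sum_range_succ]
  have hs2 : ∑ t ∈ range N, ww m n t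
      = ∑ t ∈ range (N-1), ww m n (t+1) + ww m n 0 := by
    conv_lhs => rw [(by omega : N = (N-1) + 1)]
    rw [Finset.sum_range_succ']
  have hW : ∑ t ∈ range N, ww m n t = (n+1) * (m/2 * (m/2 - 1)) + m * n := by
    rw [sum_ww m n hm hn heven]
    -- sum over all vertices of wV
    rw [Fintype.sum_prod_type]
    have e1 : ∀ i : Fin m, ∑ j : Fin (n+1), wV m n (i, j) = (n+1) * Lv m i.val + n := by
      intro i
      unfold wV
      simp only
      rw [Finset.sum_add_distrib, Finset.sum_const, Finset.card_univ]
      have : ∑ j : Fin (n+1), (if j = 0 then 0 else 1) = n := by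
        rw [Fin.sum_univ_succ]
        simp [Fin.succ_ne_zero]
      rw [this]
      simp [mul_comm]
    rw [Finset.sum_congr rfl (fun i _ => e1 i), Finset.sum_add_distrib,
      ← Finset.mul_sum, Finset.sum_const, Finset.card_univ]
    have hLsum : ∑ i : Fin m, Lv m i.val = m/2 * (m/2 - 1) := by
      obtain ⟨k, hk⟩ := heven
      have hk2 : m / 2 = k := by omega
      rw [Fin.sum_univ_eq_sum_range (fun i => Lv m i)]
      have hsplit : ∑ i ∈ range m, Lv m i
          = ∑ i ∈ range k, Lv m i + ∑ i ∈ range k, Lv m (k + i) := by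
        rw [(by omega : m = k + k), Finset.sum_range_add]
      rw [hsplit]
      have e1' : ∑ i ∈ range k, Lv m i = ∑ i ∈ range k, (k - 1 - i) := by
        refine Finset.sum_congr rfl (fun i hi => ?_)
        rw [Finset.mem_range] at hi
        unfold Lv
        rw [if_pos (by omega), hk2]
      have e2' : ∑ i ∈ range k, Lv m (k + i) = ∑ i ∈ range k, i := by
        refine Finset.sum_congr rfl (fun i hi => ?_)
        rw [Finset.mem_range] at hi
        unfold Lv
        rw [if_neg (by omega), hk2]
        omega
      have e3' : ∑ i ∈ range k, (k - 1 - i) = ∑ i ∈ range k, i := by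
        simpa using Finset.sum_range_reflect (fun i => i) k
      have h4 := Finset.sum_range_id_mul_two k
      rw [e1', e2', e3', hk2]
      omega
    rw [hLsum]
    simp [Fintype.card_fin, mul_comm]
  have hw0 := ww_zero m n hm
  have hwl := ww_last m n hm hn heven
  rw [← hN] at hwl
  have hga : ∑ t ∈ range (N-1), (gap m n t + ww m n t + ww m n (t+1))
      = FF m n (N-1) + ∑ t ∈ range (N-1), ww m n t + ∑ t ∈ range (N-1), ww m n (t+1) := by
    unfold FF
    rw [Finset.sum_add_distrib, Finset.sum_add_distrib]
  omega
end Cons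

/-! ### assembly of the upper bound -/

lemma sd_mk {n : ℕ} (a b : ℕ) (ha : a < n+1) (hb : b < n+1) :
    sd (⟨a, ha⟩ : Fin (n+1)) ⟨b, hb⟩ = sdN a b := by
  unfold sd sdN
  have h1 : ((⟨a, ha⟩ : Fin (n+1)) = ⟨b, hb⟩) ↔ a = b := by
    rw [Fin.ext_iff]
  have h2 : ((⟨a, ha⟩ : Fin (n+1)) = 0) ↔ a = 0 := by
    rw [Fin.ext_iff]; simp
  have h3 : ((⟨b, hb⟩ : Fin (n+1)) = 0) ↔ b = 0 := by
    rw [Fin.ext_iff]; simp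
  by_cases hab : a = b
  · rw [if_pos (h1.mpr hab), if_pos hab]
  · rw [if_neg (fun hc => hab (h1.mp hc)), if_neg hab]
    by_cases h0 : a = 0 ∨ b = 0
    · rw [if_pos ?_, if_pos h0]
      rcases h0 with h | h
      · exact Or.inl (h2.mpr h)
      · exact Or.inr (h3.mpr h)
    · rw [if_neg ?_, if_neg h0]
      push_neg at h0 ⊢
      exact ⟨fun hc => h0.1 (h2.mp hc), fun hc => h0.2 (h3.mp hc)⟩

section Upper

variable (m n : ℕ)

lemma dist_ordV (hm : 3 ≤ m) (hn : 3 ≤ n) (s t : ℕ) :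
    (pathGraph m □ _root_.starGraph n).dist (ordV m n (by omega) s) (ordV m n (by omega) t)
      = pd (col m (s % m)) (col m (t % m))
        + sdN (jf m n (s/m) (s%m)) (jf m n (t/m) (t%m)) := by
  rw [PS_dist m n (by omega)]
  unfold ordV
  simp only
  rw [sd_mk]

lemma dist_pos_ne (hm : 3 ≤ m) (hn : 3 ≤ n) (s t : ℕ)
    (hne : ordV m n (by omega : 0 < m) s ≠ ordV m n (by omega : 0 < m) t) :
    1 ≤ pd (col m (s % m)) (col m (t % m))
        + sdN (jf m n (s/m) (s%m)) (jf m n (t/m) (t%m)) := by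
  by_contra hc
  push_neg at hc
  have h1 : pd (col m (s % m)) (col m (t % m)) = 0 := by omega
  have h2 : sdN (jf m n (s/m) (s%m)) (jf m n (t/m) (t%m)) = 0 := by omega
  apply hne
  unfold pd at h1
  unfold sdN at h2
  have hcol : col m (s % m) = col m (t % m) := by omega
  have hjf : jf m n (s/m) (s%m) = jf m n (t/m) (t%m) := by
    by_contra hc2
    rw [if_neg hc2] at h2
    split_ifs at h2
  unfold ordV
  rw [Prod.ext_iff]
  exact ⟨Fin.ext hcol, Fin.ext hjf⟩

/-- the optimal labeling -/
noncomputable def fL (v : Fin m × Fin (n+1)) : ℕ := FF m n (invV m n v)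

lemma core_bound (hm : 3 ≤ m) (hn : 3 ≤ n) (heven : Even m)
    (u v : Fin m × Fin (n+1)) (hlt : invV m n u < invV m n v) :
    (m : ℤ) + 2 - (pathGraph m □ _root_.starGraph n).dist u v
      ≤ (fL m n v : ℤ) - fL m n u := by
  set a := invV m n u with ha
  set b := invV m n v with hb
  have hbN : b < m*(n+1) := invV_lt m n hm hn heven v
  have hu : ordV m n (by omega : 0 < m) a = u := ordV_invV m n hm hn heven u
  have hv : ordV m n (by omega : 0 < m) b = v := ordV_invV m n hm hn heven v
  have hdist : (pathGraph m □ _root_.starGraph n).dist u v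
      = pd (col m (a % m)) (col m (b % m))
        + sdN (jf m n (a/m) (a%m)) (jf m n (b/m) (b%m)) := by
    rw [← hu, ← hv]
    exact dist_ordV m n hm hn a b
  have hfd : fL m n v = fL m n u + ∑ i ∈ Finset.Ico a b, gap m n i := by
    unfold fL
    rw [← ha, ← hb]
    exact FF_sub m n a b (by omega)
  have hsum : ∑ i ∈ Finset.Ico a b, gap m n i
      = ∑ i ∈ Finset.range (b - a), gap m n (a + i) := by
    rw [Finset.sum_Ico_eq_sum_range]
  -- three cases
  rcases (by omega : b = a + 1 ∨ b = a + 2 ∨ a + 3 ≤ b) with hcase | hcase | hcase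
  · -- consecutive
    have hkey := key_step m n hm hn heven a (by omega)
    have hgw := gap_ww m n heven hm a
    have hs : ∑ i ∈ Finset.Ico a b, gap m n i = gap m n a := by
      rw [hsum, hcase]
      simp
    rw [hfd, hs, hdist, hcase]
    omega
  · -- skip two
    have hkey := key_skip2 m n hm hn heven a (by omega)
    have hgw1 := gap_ww m n heven hm a
    have hgw2 : gap m n (a+1) + ww m n (a+1) + ww m n (a+2) = m + 1 :=
      gap_ww m n heven hm (a+1)
    have hba : b - a = 2 := by omega
    have hs : ∑ i ∈ Finset.Ico a b, gap m n i = gap m n a + gap m n (a+1) := by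
      rw [hsum, hba, Finset.sum_range_succ, Finset.sum_range_one]
      simp
    rw [hfd, hs, hdist, hcase]
    omega
  · -- far apart
    have hkey := key_window m n hm hn heven a (by omega)
    have hgw1 := gap_ww m n heven hm a
    have hgw2 : gap m n (a+1) + ww m n (a+1) + ww m n (a+2) = m + 1 :=
      gap_ww m n heven hm (a+1)
    have hgw3 : gap m n (a+2) + ww m n (a+2) + ww m n (a+3) = m + 1 :=
      gap_ww m n heven hm (a+2)
    have hne : ordV m n (by omega : 0 < m) a ≠ ordV m n (by omega : 0 < m) b := by
      intro hc
      have := congrArg (invV m n) hc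
      rw [invV_ordV m n hm hn heven a (by omega), invV_ordV m n hm hn heven b hbN] at this
      omega
    have hpos := dist_pos_ne m n hm hn a b hne
    have hs3 : gap m n a + gap m n (a+1) + gap m n (a+2)
        ≤ ∑ i ∈ Finset.Ico a b, gap m n i := by
      rw [hsum]
      obtain ⟨r, hr⟩ : ∃ r, b - a = 3 + r := ⟨b - a - 3, by omega⟩
      rw [hr, Finset.sum_range_add]
      have : ∑ i ∈ Finset.range 3, gap m n (a + i)
          = gap m n a + gap m n (a+1) + gap m n (a+2) := by
        rw [Finset.sum_range_succ, Finset.sum_range_succ, Finset.sum_range_one]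
        simp
      omega
    rw [hfd, hdist]
    omega

lemma fL_is_radio (hm : 3 ≤ m) (hn : 3 ≤ n) (heven : Even m) :
    IsRadioLabeling (pathGraph m □ _root_.starGraph n) (fL m n) := by
  intro u v hne
  have hdiam := PS_diam m n hm hn
  have hinv : invV m n u ≠ invV m n v := by
    intro hc
    apply hne
    have h1 := ordV_invV m n hm hn heven u
    have h2 := ordV_invV m n hm hn heven v
    rw [← h1, ← h2, hc]
  rw [hdiam]
  rcases Nat.lt_or_ge (invV m n u) (invV m n v) with hlt | hge
  · have hcore := core_bound m n hm hn heven u v hlt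
    have hmono : fL m n u ≤ fL m n v := by
      unfold fL
      exact FF_mono m n _ _ (by omega)
    have h0 : (0:ℤ) ≤ (fL m n v : ℤ) - fL m n u := by omega
    rw [abs_sub_comm, abs_of_nonneg h0]
    omega
  · have hlt : invV m n v < invV m n u := by omega
    have hcore := core_bound m n hm hn heven v u hlt
    have hmono : fL m n v ≤ fL m n u := by
      unfold fL
      exact FF_mono m n _ _ (by omega)
    have h0 : (0:ℤ) ≤ (fL m n u : ℤ) - fL m n v := by omega
    rw [SimpleGraph.dist_comm] at hcore
    rw [abs_of_nonneg h0]
    omega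

lemma fL_span (hm : 3 ≤ m) (hn : 3 ≤ n) (heven : Even m) :
    radioSpan (fL m n) = m/2 * m * (n+1) + m - 1 := by
  set N := m * (n+1) with hN
  have hN1 : 1 ≤ N := by
    have : 0 < m*(n+1) := by positivity
    omega
  set T := FF m n (N - 1) with hT
  have hfle : ∀ v : Fin m × Fin (n+1), fL m n v ≤ T := by
    intro v
    unfold fL
    apply FF_mono
    have := invV_lt m n hm hn heven v
    omega
  have hTeq : radioSpan (fL m n) = T := by
    unfold radioSpan
    apply le_antisymm
    · apply Finset.sup_le
      intro p _
      have h1 := hfle p.1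
      have h2 := hfle p.2
      omega
    · have hle := Finset.le_sup
        (f := fun p : (Fin m × Fin (n+1)) × (Fin m × Fin (n+1)) =>
          ((fL m n p.1 : ℤ) - (fL m n p.2 : ℤ)).natAbs)
        (Finset.mem_univ ((ordV m n (by omega : 0 < m) (N-1)),
          (ordV m n (by omega : 0 < m) 0)))
      have e1 : fL m n (ordV m n (by omega : 0 < m) (N-1)) = T := by
        unfold fL
        rw [invV_ordV m n hm hn heven (N-1) (by omega)]
      have e2 : fL m n (ordV m n (by omega : 0 < m) 0) = 0 := by
        unfold fL
        rw [invV_ordV m n hm hn heven 0 (by omega)]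
        unfold FF
        simp
      simp only [e1, e2] at hle
      have e3 : ((T : ℤ) - ((0:ℕ) : ℤ)).natAbs = T := by simp
      rw [e3] at hle
      exact hle
  rw [hTeq]
  -- now compute T
  obtain ⟨k, hk⟩ := heven
  have hid := span_identity m n hm hn ⟨k, hk⟩
  rw [← hN, ← hT] at hid
  have hk2 : m / 2 = k := by omega
  have hkpos : 1 ≤ k := by omega
  set A := m/2 * m * (n+1) with hA
  have hAk : A = k * m * (n+1) := by rw [hA, hk2]
  -- integer identity
  rw [hk2] at hid
  have hNZ : ((N:ℕ) : ℤ) = (m:ℤ) * (n+1) := by rw [hN]; push_cast; ring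
  have hmZ : (m:ℤ) = 2*k := by omega
  have hidZ : (T:ℤ) + 2*(((n:ℤ)+1)*((k:ℤ)*((k:ℤ)-1)) + (m:ℤ)*n)
      = ((N:ℤ)-1)*((m:ℤ)+1) := by
    have hcast := congrArg (Nat.cast : ℕ → ℤ) hid
    push_cast [Nat.cast_sub hN1, Nat.cast_sub hkpos] at hcast
    push_cast
    linarith
  have hTz : (T:ℤ) = (k:ℤ)*(m:ℤ)*((n:ℤ)+1) + (m:ℤ) - 1 := by
    rw [hNZ, hmZ] at hidZ
    rw [hmZ]
    linear_combination hidZ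
  have hAZ : (A:ℤ) = (k:ℤ)*(m:ℤ)*((n:ℤ)+1) := by
    rw [hAk]; push_cast; ring
  omega

end Upper

end RadioAux

/-- rn(P_m □ K_{1,n}) = (m²(n+1) + 2(m − 1))/2 for m, n ≥ 3 with m even. -/
theorem stmt_14 (m n : ℕ) (hm : 3 ≤ m) (hn : 3 ≤ n) (heven : Even m) :
    2 * radioNumber (SimpleGraph.pathGraph m □ _root_.starGraph n) =
      m ^ 2 * (n + 1) + 2 * (m - 1) := by
  have hlab := RadioAux.fL_is_radio m n hm hn heven
  have hspan := RadioAux.fL_span m n hm hn heven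
  have hmem : m/2 * m * (n+1) + m - 1 ∈
      {s | ∃ f : Fin m × Fin (n+1) → ℕ,
        IsRadioLabeling (SimpleGraph.pathGraph m □ _root_.starGraph n) f ∧ s = radioSpan f} :=
    ⟨RadioAux.fL m n, hlab, hspan.symm⟩
  have hub : radioNumber (SimpleGraph.pathGraph m □ _root_.starGraph n)
      ≤ m/2 * m * (n+1) + m - 1 := Nat.sInf_le hmem
  have hlb : m/2 * m * (n+1) + m - 1
      ≤ radioNumber (SimpleGraph.pathGraph m □ _root_.starGraph n) := by
    apply le_csInf ⟨_, hmem⟩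
    rintro s ⟨f, hf, rfl⟩
    exact RadioAux.lower_bound m n hm hn heven f hf
  have heq : radioNumber (SimpleGraph.pathGraph m □ _root_.starGraph n)
      = m/2 * m * (n+1) + m - 1 := le_antisymm hub hlb
  rw [heq]
  obtain ⟨k, hk⟩ := heven
  have hk2 : m / 2 = k := by omega
  have h2A : 2 * (m/2 * m * (n+1)) = m^2 * (n+1) := by
    rw [hk2]
    calc 2*(k*m*(n+1)) = (2*k)*(m*(n+1)) := by ring
    _ = m*(m*(n+1)) := by rw [(by omega : 2*k = m)]
    _ = m^2*(n+1) := by ring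
  omega
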